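/- GAP SAFE ball via duality gap: for any β ∈ ℝᵖ and θ ∈ Δ_X, the dual optimal Lasso solution θ̂ satisfies ‖θ̂ − θ‖ ≤ (1/λ)·√(2 G_λ(β, θ)), where G_λ(β,θ) = P_λ(β) − D_λ(θ) is the duality gap. -/

import Mathlib

open scoped BigOperators

def toE {n : ℕ} (v : Fin n → ℝ) : EuclideanSpace ℝ (Fin n) := WithLp.toLp 2 v

/-!
`θ̂` is the projection of `y/λ` onto the convex set `Δ_X`, so by the obtuse-angle criterion
`‖θ - y/λ‖² ≥ ‖θ - θ̂‖² + ‖θ̂ - y/λ‖²` for every `θ ∈ Δ_X`; multiplied by `λ²/2` this is the strong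
concavity estimate `D_λ(θ) + (λ²/2)‖θ - θ̂‖² ≤ D_λ(θ̂)`. Weak duality `D_λ(θ̂) ≤ P_λ(β)` comes from
the identity `P_λ(β) - D_λ(θ) = ½‖Xβ - y + λθ‖² + λ(‖β‖₁ - ⟪Xβ, θ⟫)` together with
`⟪Xβ, θ⟫ = ⟪β, Xᵀθ⟫ ≤ ‖β‖₁ ‖Xᵀθ‖_∞ ≤ ‖β‖₁`. Hence `G_λ(β, θ) ≥ (λ²/2)‖θ̂ - θ‖²`.
-/

open scoped InnerProductSpace Matrix

section Projection

variable {E : Type*} [NormedAddCommGroup E] [InnerProductSpace ℝ E]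

theorem norm_sub_sq_add_norm_sub_sq_le_of_forall_norm_sub_le {K : Set E} (hK : Convex ℝ K)
    {u p x : E} (hp : p ∈ K) (hmin : ∀ w ∈ K, ‖p - u‖ ≤ ‖w - u‖) (hx : x ∈ K) :
    ‖x - p‖ ^ 2 + ‖p - u‖ ^ 2 ≤ ‖x - u‖ ^ 2 := by
  have : Nonempty K := ⟨⟨p, hp⟩⟩
  have hinf : ‖u - p‖ = ⨅ w : K, ‖u - w‖ :=
    le_antisymm (le_ciInf fun w => by simpa only [norm_sub_rev u] using hmin w w.2)
      (ciInf_le ⟨0, Set.forall_mem_range.2 fun _ => norm_nonneg _⟩ (⟨p, hp⟩ : K))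
  have hvar := (norm_eq_iInf_iff_real_inner_le_zero hK hp).1 hinf x hx
  have hsplit : x - u = (x - p) - (u - p) := by abel
  rw [hsplit, norm_sub_sq_real (x - p), norm_sub_rev p u, real_inner_comm]
  linarith

end Projection

theorem dotProduct_le_sum_abs_mul_norm {ι : Type*} [Fintype ι] (β v : ι → ℝ) :
    β ⬝ᵥ v ≤ (∑ j, |β j|) * ‖v‖ := by
  rw [Finset.sum_mul]
  refine Finset.sum_le_sum fun j _ => ?_
  calc β j * v j ≤ |β j * v j| := le_abs_self _
    _ = |β j| * ‖v j‖ := by rw [abs_mul, Real.norm_eq_abs]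
    _ ≤ |β j| * ‖v‖ := by gcongr; exact norm_le_pi_norm v j

namespace Lasso

variable {n p : ℕ}

/-- `Fin p → ℝ` carries the sup norm, so this is `‖Xᵀθ‖_∞ ≤ 1`. -/
noncomputable def dualFeasible (X : Matrix (Fin n) (Fin p) ℝ) : Set (EuclideanSpace ℝ (Fin n)) :=
  {θ | ‖Xᵀ *ᵥ θ.ofLp‖ ≤ 1}

theorem mem_dualFeasible_iff (X : Matrix (Fin n) (Fin p) ℝ) (θ : EuclideanSpace ℝ (Fin n)) :
    θ ∈ dualFeasible X ↔ ∀ j, |∑ i, X i j * θ i| ≤ 1 := by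
  simp only [dualFeasible, Set.mem_ofPred_eq, pi_norm_le_iff_of_nonneg zero_le_one,
    Real.norm_eq_abs]
  rfl

theorem convex_dualFeasible (X : Matrix (Fin n) (Fin p) ℝ) : Convex ℝ (dualFeasible X) := by
  let L := Matrix.toLin' Xᵀ ∘ₗ (WithLp.linearEquiv 2 ℝ (Fin n → ℝ)).toLinearMap
  have hL : dualFeasible X = L ⁻¹' Metric.closedBall 0 1 := by
    ext θ
    simp [dualFeasible, L]
  exact hL ▸ (convex_closedBall 0 1).linear_preimage L

section Dual

variable {E : Type*} [NormedAddCommGroup E] [InnerProductSpace ℝ E]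

noncomputable def dual (y : E) (lam : ℝ) (θ : E) : ℝ :=
  (1/2) * ‖y‖^2 - (lam^2/2) * ‖θ - (1/lam) • y‖^2

theorem half_norm_sub_sq_sub_dual {lam : ℝ} (hlam : lam ≠ 0) (r y θ : E) :
    (1/2) * ‖r - y‖^2 - dual y lam θ = (1/2) * ‖r - y + lam • θ‖^2 - lam * ⟪r, θ⟫_ℝ := by
  have hscale : lam^2 * ‖θ - (1/lam) • y‖^2 = ‖lam • θ - y‖^2 := by
    rw [← sq_abs lam, ← Real.norm_eq_abs, ← mul_pow, ← norm_smul, smul_sub, smul_smul,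
      mul_one_div_cancel hlam, one_smul]
  have hexp : ‖r - y + lam • θ‖^2 = ‖r - y‖^2 + 2 * lam * ⟪r, θ⟫_ℝ - 2 * lam * ⟪y, θ⟫_ℝ
      + lam^2 * ‖θ‖^2 := by
    rw [norm_add_sq_real, inner_smul_right, inner_sub_left, norm_smul, Real.norm_eq_abs, mul_pow,
      sq_abs]
    ring
  have hexp' : ‖lam • θ - y‖^2 = lam^2 * ‖θ‖^2 - 2 * lam * ⟪y, θ⟫_ℝ + ‖y‖^2 := by
    rw [norm_sub_sq_real, real_inner_smul_left, real_inner_comm, norm_smul, Real.norm_eq_abs,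
      mul_pow, sq_abs]
    ring
  rw [dual]
  linarith

theorem dual_add_sq_le_dual {K : Set E} (hK : Convex ℝ K) {y : E} {lam : ℝ} {θh θ : E}
    (hθh : θh ∈ K) (hproj : ∀ w ∈ K, ‖θh - (1/lam) • y‖ ≤ ‖w - (1/lam) • y‖) (hθ : θ ∈ K) :
    dual y lam θ + (lam^2/2) * ‖θ - θh‖^2 ≤ dual y lam θh := by
  have hpyth := norm_sub_sq_add_norm_sub_sq_le_of_forall_norm_sub_le hK hθh hproj hθ
  have hscaled := mul_le_mul_of_nonneg_left hpyth (by positivity : (0 : ℝ) ≤ lam^2/2)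
  unfold dual
  linarith

end Dual

noncomputable def primal (X : Matrix (Fin n) (Fin p) ℝ) (y : EuclideanSpace ℝ (Fin n)) (lam : ℝ)
    (β : Fin p → ℝ) : ℝ :=
  (1/2) * ‖toE (X *ᵥ β) - y‖^2 + lam * ∑ j, |β j|

theorem inner_toE_mulVec (X : Matrix (Fin n) (Fin p) ℝ) (β : Fin p → ℝ)
    (θ : EuclideanSpace ℝ (Fin n)) : ⟪toE (X *ᵥ β), θ⟫_ℝ = β ⬝ᵥ (Xᵀ *ᵥ θ.ofLp) := by
  rw [EuclideanSpace.inner_eq_star_dotProduct, star_trivial, Matrix.mulVec_transpose,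
    dotProduct_comm β, ← Matrix.dotProduct_mulVec]
  rfl

theorem dual_le_primal {X : Matrix (Fin n) (Fin p) ℝ} {lam : ℝ} (hlam : 0 < lam)
    {θ : EuclideanSpace ℝ (Fin n)} (hθ : θ ∈ dualFeasible X) (y : EuclideanSpace ℝ (Fin n))
    (β : Fin p → ℝ) : dual y lam θ ≤ primal X y lam β := by
  have hpair : ⟪toE (X *ᵥ β), θ⟫_ℝ ≤ ∑ j, |β j| := by
    rw [inner_toE_mulVec]
    calc β ⬝ᵥ (Xᵀ *ᵥ θ.ofLp) ≤ (∑ j, |β j|) * ‖Xᵀ *ᵥ θ.ofLp‖ := dotProduct_le_sum_abs_mul_norm _ _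
      _ ≤ ∑ j, |β j| := mul_le_of_le_one_right (by positivity) hθ
  have hgap := half_norm_sub_sq_sub_dual hlam.ne' (toE (X *ᵥ β)) y θ
  have hpair' := mul_le_mul_of_nonneg_left hpair hlam.le
  unfold primal
  linarith [sq_nonneg ‖toE (X *ᵥ β) - y + lam • θ‖]

end Lasso

/-- GAP SAFE ball via the duality gap: for any `β` and dual
feasible `θ`, the dual optimal `θ̂ = Π_{Δ_X}(y/λ)` satisfies
`‖θ̂ − θ‖ ≤ (1/λ)√(2·G_λ(β,θ))` where `G_λ(β,θ) = P_λ(β) − D_λ(θ)`. -/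
theorem lasso_gap_safe_sphere {n p : ℕ}
    (X : Matrix (Fin n) (Fin p) ℝ) (y : EuclideanSpace ℝ (Fin n))
    (lam : ℝ) (hlam : 0 < lam)
    (Δ : Set (EuclideanSpace ℝ (Fin n)))
    (hΔ : Δ = {θ | ∀ j, |∑ i, X i j * θ i| ≤ 1})
    (θh : EuclideanSpace ℝ (Fin n))
    (hfeas : θh ∈ Δ)
    (hproj : ∀ θ' ∈ Δ, ‖θh - (1/lam) • y‖ ≤ ‖θ' - (1/lam) • y‖)
    (β : Fin p → ℝ) (θ : EuclideanSpace ℝ (Fin n)) (hθ : θ ∈ Δ)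
    (G : ℝ)
    (hG : G = ((1/2) * ‖toE (X.mulVec β) - y‖^2 + lam * ∑ j, |β j|)
            - ((1/2) * ‖y‖^2 - (lam^2/2) * ‖θ - (1/lam) • y‖^2)) :
    ‖θh - θ‖ ≤ (1/lam) * Real.sqrt (2 * G) := by
  obtain rfl : Δ = Lasso.dualFeasible X :=
    hΔ.trans (Set.ext fun θ => (Lasso.mem_dualFeasible_iff X θ).symm)
  have hG' : G = Lasso.primal X y lam β - Lasso.dual y lam θ := hG
  have hconcave := Lasso.dual_add_sq_le_dual (Lasso.convex_dualFeasible X) hfeas hproj hθ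
  have hweak := Lasso.dual_le_primal hlam hfeas y β
  have hball : (lam * ‖θh - θ‖)^2 ≤ 2 * G := by
    rw [mul_pow, norm_sub_rev, hG']
    linarith
  rw [one_div_mul_eq_div, le_div_iff₀ hlam, mul_comm]
  exact Real.le_sqrt_of_sq_le hball
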